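/- For all points x, y in the upper half space ℍⁿ one has sinh(ρ(x,y)/2) ≥ ((xₙ + yₙ)/(2√(xₙyₙ)))·√( 1 − 4xₙyₙ/((xₙ+yₙ)² + |x′−y′|²) ) ≥ (xₙ + yₙ)·|x′−y′| / ( 2√(xₙyₙ)·√((xₙ+yₙ)² + |x′−y′|²) ), where x′ = x − xₙeₙ and y′ = y − yₙeₙ are the orthogonal projections of x and y onto the boundary hyperplane { zₙ = 0 }. -/

import Mathlib

/-! The hyperbolic distance satisfies `sinh (ρ/2) = |x - y| / (2√(xₙyₙ))`, and
`|x - y|² = |x' - y'|² + (xₙ - yₙ)²`. With `S = (xₙ + yₙ)² + |x' - y'|²` one has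
`1 - 4xₙyₙ/S = |x - y|²/S`, so the middle term equals `sinh (ρ/2) · (xₙ + yₙ)/√S`. It is at most
`sinh (ρ/2)` because `xₙ + yₙ ≤ √S`, and at least the right-hand side because `|x' - y'| ≤ |x - y|`. -/

/-- The inverse hyperbolic cosine: `arcosh t = log (t + √(t² − 1))`. -/
noncomputable def arcosh (t : ℝ) : ℝ := Real.log (t + Real.sqrt (t ^ 2 - 1))

/-- Hyperbolic distance in the upper half space
`ℍⁿ = { x ∈ ℝⁿ : xₙ > 0 }` (here `ℝⁿ = EuclideanSpace ℝ (Fin (n+1))` with last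
coordinate `x (Fin.last n)`): `cosh ρ(x,y) = 1 + |x−y|²/(2 xₙ yₙ)`. -/
noncomputable def hypDistHalf {n : ℕ} (x y : EuclideanSpace ℝ (Fin (n + 1))) : ℝ :=
  arcosh (1 + ‖x - y‖ ^ 2 / (2 * x (Fin.last n) * y (Fin.last n)))

theorem arcosh_eq_real_arcosh : arcosh = Real.arcosh := rfl

theorem Real.sinh_half_arcosh {t : ℝ} (ht : 1 ≤ t) :
    Real.sinh (Real.arcosh t / 2) = √((t - 1) / 2) := by
  have hsq : Real.sinh (Real.arcosh t / 2) ^ 2 = (t - 1) / 2 := by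
    have h := Real.cosh_two_mul (Real.arcosh t / 2)
    rw [mul_div_cancel₀ _ two_ne_zero, Real.cosh_arcosh ht, Real.cosh_sq] at h
    linarith
  rw [← hsq, Real.sqrt_sq (Real.sinh_nonneg_iff.2 (by linarith [Real.arcosh_nonneg ht]))]

theorem sinh_half_hypDistHalf {n : ℕ} {x y : EuclideanSpace ℝ (Fin (n + 1))}
    (hx : 0 < x (Fin.last n)) (hy : 0 < y (Fin.last n)) :
    Real.sinh (hypDistHalf x y / 2) =
      ‖x - y‖ / (2 * √(x (Fin.last n) * y (Fin.last n))) := by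
  have hxy : 0 < x (Fin.last n) * y (Fin.last n) := mul_pos hx hy
  have hq : 0 ≤ ‖x - y‖ ^ 2 / (2 * x (Fin.last n) * y (Fin.last n)) :=
    div_nonneg (sq_nonneg _) (by rw [mul_assoc]; positivity)
  rw [hypDistHalf, arcosh_eq_real_arcosh, Real.sinh_half_arcosh (by linarith),
    Real.sqrt_eq_iff_eq_sq (by linarith) (by positivity), div_pow, mul_pow,
    Real.sq_sqrt hxy.le]
  ring

theorem EuclideanSpace.norm_sq_eq_norm_sub_smul_single_sq_add_sq {ι : Type*} [Fintype ι]
    [DecidableEq ι] (v : EuclideanSpace ℝ ι) (i : ι) :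
    ‖v‖ ^ 2 = ‖v - v i • EuclideanSpace.single i (1 : ℝ)‖ ^ 2 + v i ^ 2 := by
  have horth : inner ℝ (v - v i • EuclideanSpace.single i (1 : ℝ))
      (v i • EuclideanSpace.single i (1 : ℝ)) = 0 := by
    simp only [inner_sub_left, real_inner_smul_right, inner_single_right, Real.ringHom_apply,
      one_mul, inner_self_eq_norm_sq_to_K, norm_smul, Real.norm_eq_abs, PiLp.norm_single,
      norm_one, mul_one, sq_abs]
    ring
  have h := norm_add_sq_eq_norm_sq_add_norm_sq_real horth
  rw [sub_add_cancel, norm_smul, PiLp.norm_single] at h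
  simp only [norm_one, mul_one, Real.norm_eq_abs, abs_mul_abs_self] at h
  rw [sq, sq, sq, h]

theorem EuclideanSpace.norm_sub_sq_eq_norm_sub_smul_single_sq_add_sq {ι : Type*} [Fintype ι]
    [DecidableEq ι] (x y : EuclideanSpace ℝ ι) (i : ι) :
    ‖x - y‖ ^ 2 = ‖(x - x i • EuclideanSpace.single i (1 : ℝ)) -
      (y - y i • EuclideanSpace.single i (1 : ℝ))‖ ^ 2 + (x i - y i) ^ 2 := by
  rw [norm_sq_eq_norm_sub_smul_single_sq_add_sq (x - y) i, PiLp.sub_apply, sub_smul]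
  congr 3
  abel

section

variable {a b c d r : ℝ}

theorem sqrt_one_sub_four_mul_div_eq (hab : 0 < a + b) (hc : 0 ≤ c)
    (hcd : c ^ 2 = d ^ 2 + (a - b) ^ 2) :
    √(1 - 4 * (a * b) / ((a + b) ^ 2 + d ^ 2)) = c / √((a + b) ^ 2 + d ^ 2) := by
  have hS : 0 < (a + b) ^ 2 + d ^ 2 := by positivity
  rw [← Real.sqrt_sq hc, ← Real.sqrt_div' _ hS.le]
  congr 1
  field_simp
  rw [hcd]
  ring

theorem div_mul_sqrt_one_sub_four_mul_div_le (hab : 0 < a + b) (hc : 0 ≤ c)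
    (hcd : c ^ 2 = d ^ 2 + (a - b) ^ 2) (hr : 0 ≤ r) :
    (a + b) / r * √(1 - 4 * (a * b) / ((a + b) ^ 2 + d ^ 2)) ≤ c / r := by
  have hle : a + b ≤ √((a + b) ^ 2 + d ^ 2) := Real.le_sqrt_of_sq_le (by nlinarith)
  rw [sqrt_one_sub_four_mul_div_eq hab hc hcd, div_mul_div_comm, mul_comm (a + b) c]
  calc c * (a + b) / (r * √((a + b) ^ 2 + d ^ 2))
      ≤ c * √((a + b) ^ 2 + d ^ 2) / (r * √((a + b) ^ 2 + d ^ 2)) := by gcongr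
    _ = c / r := by
      rw [mul_div_mul_right _ _ (Real.sqrt_pos.2 (by positivity)).ne']

theorem mul_div_le_div_mul_sqrt_one_sub_four_mul_div (hab : 0 < a + b) (hc : 0 ≤ c)
    (hcd : c ^ 2 = d ^ 2 + (a - b) ^ 2) (hr : 0 ≤ r) :
    (a + b) * d / (r * √((a + b) ^ 2 + d ^ 2)) ≤
      (a + b) / r * √(1 - 4 * (a * b) / ((a + b) ^ 2 + d ^ 2)) := by
  have hdc : d ≤ c := (le_abs_self d).trans (abs_le_of_sq_le_sq (by nlinarith) hc)
  rw [sqrt_one_sub_four_mul_div_eq hab hc hcd, div_mul_div_comm]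
  gcongr

end

theorem sinh_half_hypDistHalf_lower_bound {n : ℕ} (x y : EuclideanSpace ℝ (Fin (n + 1)))
    (hx : 0 < x (Fin.last n)) (hy : 0 < y (Fin.last n)) :
    Real.sinh (hypDistHalf x y / 2) ≥
      (x (Fin.last n) + y (Fin.last n)) / (2 * Real.sqrt (x (Fin.last n) * y (Fin.last n))) *
        Real.sqrt (1 - 4 * (x (Fin.last n) * y (Fin.last n)) /
          ((x (Fin.last n) + y (Fin.last n)) ^ 2 +
            ‖(x - x (Fin.last n) • EuclideanSpace.single (Fin.last n) (1 : ℝ)) -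
              (y - y (Fin.last n) • EuclideanSpace.single (Fin.last n) (1 : ℝ))‖ ^ 2)) ∧
    (x (Fin.last n) + y (Fin.last n)) / (2 * Real.sqrt (x (Fin.last n) * y (Fin.last n))) *
        Real.sqrt (1 - 4 * (x (Fin.last n) * y (Fin.last n)) /
          ((x (Fin.last n) + y (Fin.last n)) ^ 2 +
            ‖(x - x (Fin.last n) • EuclideanSpace.single (Fin.last n) (1 : ℝ)) -
              (y - y (Fin.last n) • EuclideanSpace.single (Fin.last n) (1 : ℝ))‖ ^ 2)) ≥
      (x (Fin.last n) + y (Fin.last n)) *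
          ‖(x - x (Fin.last n) • EuclideanSpace.single (Fin.last n) (1 : ℝ)) -
            (y - y (Fin.last n) • EuclideanSpace.single (Fin.last n) (1 : ℝ))‖ /
        (2 * Real.sqrt (x (Fin.last n) * y (Fin.last n)) *
          Real.sqrt ((x (Fin.last n) + y (Fin.last n)) ^ 2 +
            ‖(x - x (Fin.last n) • EuclideanSpace.single (Fin.last n) (1 : ℝ)) -
              (y - y (Fin.last n) • EuclideanSpace.single (Fin.last n) (1 : ℝ))‖ ^ 2)) := by
  have hab : 0 < x (Fin.last n) + y (Fin.last n) := add_pos hx hy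
  have hpyth := EuclideanSpace.norm_sub_sq_eq_norm_sub_smul_single_sq_add_sq x y (Fin.last n)
  have hr : 0 ≤ 2 * √(x (Fin.last n) * y (Fin.last n)) := by positivity
  rw [sinh_half_hypDistHalf hx hy]
  exact ⟨div_mul_sqrt_one_sub_four_mul_div_le hab (norm_nonneg _) hpyth hr,
    mul_div_le_div_mul_sqrt_one_sub_four_mul_div hab (norm_nonneg _) hpyth hr⟩
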